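/- Let X be a scalar Gaussian random variable with mean μ and variance σ², and let g : ℝ → ℝ be n times continuously differentiable with g and its derivatives up to order n of polynomial growth. Then E[g(X)·X^n] = Σ_{ℓ=0}^n C(n,ℓ) μ^{n-ℓ} Σ_{k=0}^{⌊ℓ/2⌋} H(ℓ,k) σ^{2(ℓ-k)} E[g^{(ℓ-2k)}(X)], where H(ℓ,k) = ℓ!/(2^k k! (ℓ-2k)!). -/

import Mathlib

open MeasureTheory ProbabilityTheory

/-!
Expand `x ^ n = ∑ C(n, ℓ) μ^(n-ℓ) (x - μ)^ℓ` and let `M_ℓ(g) = E[g(X) (X - μ)^ℓ]`. Since the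
Gaussian density `φ` satisfies `φ' = -(x - μ)/σ² · φ`, integration by parts gives Stein's identity
`E[f(X) (X - μ)] = σ² E[f'(X)]`; applied to `f = g · (x - μ)^ℓ` it yields the recursion
`M_{ℓ+1}(g) = σ² (M_ℓ(g') + ℓ M_{ℓ-1}(g))`. The Bessel numbers obey the matching recursion
`H(ℓ+1, k+1) = H(ℓ, k+1) + ℓ H(ℓ-1, k)` (the last point is unmatched, or matched to one of the
other `ℓ`), so induction on `ℓ` gives `M_ℓ(g) = ∑ₖ H(ℓ, k) σ^(2(ℓ-k)) E[g^(ℓ-2k)(X)]`. All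
integrands have polynomial growth, hence are integrable since the Gaussian has all moments.
-/

open scoped Real NNReal Nat

/-- The Bessel number `H(ℓ, k) = ℓ! / (2^k k! (ℓ - 2k)!)`, written as `C(ℓ, 2k) · (2k - 1)‼`
(choose the `2k` matched points, then a perfect matching of them) so that it vanishes for `2k > ℓ`
without a case split. At `k = 0` the truncated subtraction gives `0‼ = 1`, the right value. -/
def besselNumber (l k : ℕ) : ℕ := l.choose (2 * k) * (2 * k - 1)‼

theorem besselNumber_eq_zero_of_lt {l k : ℕ} (h : l < 2 * k) : besselNumber l k = 0 := by
  simp [besselNumber, Nat.choose_eq_zero_of_lt h]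

theorem besselNumber_succ_succ (l k : ℕ) :
    besselNumber (l + 1) (k + 1) = besselNumber l (k + 1) + l * besselNumber (l - 1) k := by
  rcases l with _ | m
  · simp [besselNumber_eq_zero_of_lt (show 1 < 2 * (k + 1) by omega),
      besselNumber_eq_zero_of_lt (show 0 < 2 * (k + 1) by omega)]
  · have hodd : (2 * (k + 1) - 1)‼ = (2 * k + 1) * (2 * k - 1)‼ := by
      rw [show 2 * (k + 1) - 1 = 2 * k + 1 by omega, Nat.doubleFactorial_add_one]
    have hpascal : (m + 1 + 1).choose (2 * (k + 1)) =
        (m + 1).choose (2 * k + 1) + (m + 1).choose (2 * (k + 1)) :=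
      Nat.choose_succ_succ' (m + 1) (2 * k + 1)
    rw [besselNumber, besselNumber, besselNumber, hodd, hpascal, Nat.add_sub_cancel]
    rw [← mul_assoc (m + 1), Nat.add_one_mul_choose_eq]
    ring

@[simp]
theorem besselNumber_zero_right (l : ℕ) : besselNumber l 0 = 1 := by
  simp [besselNumber]

theorem factorial_two_mul_eq_mul_doubleFactorial (k : ℕ) :
    (2 * k)! = 2 ^ k * k ! * (2 * k - 1)‼ := by
  rcases k with _ | j
  · rfl
  · rw [show 2 * (j + 1) = (2 * j + 1) + 1 by ring, Nat.factorial_eq_mul_doubleFactorial,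
      show 2 * j + 1 + 1 = 2 * (j + 1) by ring, Nat.doubleFactorial_two_mul,
      show 2 * (j + 1) - 1 = 2 * j + 1 by omega]

theorem besselNumber_mul_eq_factorial {l k : ℕ} (h : 2 * k ≤ l) :
    besselNumber l k * (2 ^ k * k ! * (l - 2 * k)!) = l ! := by
  rw [← Nat.choose_mul_factorial_mul_factorial h, factorial_two_mul_eq_mul_doubleFactorial,
    besselNumber]
  ring

theorem cast_besselNumber_eq_div {l k : ℕ} (h : 2 * k ≤ l) :
    (besselNumber l k : ℝ) = l ! / (2 ^ k * k ! * (l - 2 * k)!) := by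
  rw [eq_div_iff (by positivity)]
  exact_mod_cast besselNumber_mul_eq_factorial h

theorem sum_besselNumber_succ (l K : ℕ) (v : ℝ) (I : ℕ → ℝ) :
    ∑ k ∈ Finset.range (K + 1),
        (besselNumber (l + 1) k : ℝ) * v ^ (l + 1 - k) * I (l + 1 - 2 * k) =
      v * (∑ k ∈ Finset.range (K + 1), (besselNumber l k : ℝ) * v ^ (l - k) * I (l - 2 * k + 1) +
        l * ∑ k ∈ Finset.range K,
          (besselNumber (l - 1) k : ℝ) * v ^ (l - 1 - k) * I (l - 1 - 2 * k)) := by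
  rw [Finset.sum_range_succ', Finset.sum_range_succ', mul_add, mul_add, Finset.mul_sum,
    Finset.mul_sum, Finset.mul_sum, add_right_comm, ← Finset.sum_add_distrib]
  congr 1
  · refine Finset.sum_congr rfl fun k _ => ?_
    have hfirst :
        v * ((besselNumber l (k + 1) : ℝ) * v ^ (l - (k + 1)) * I (l - 2 * (k + 1) + 1)) =
          besselNumber l (k + 1) * v ^ (l - k) * I (l - 1 - 2 * k) := by
      rcases le_or_gt (2 * (k + 1)) l with h | h
      · rw [show l - 2 * (k + 1) + 1 = l - 1 - 2 * k by omega,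
          show l - k = l - (k + 1) + 1 by omega, pow_succ]
        ring
      · simp [besselNumber_eq_zero_of_lt h]
    have hsecond :
        v * (l * ((besselNumber (l - 1) k : ℝ) * v ^ (l - 1 - k) * I (l - 1 - 2 * k))) =
          l * besselNumber (l - 1) k * v ^ (l - k) * I (l - 1 - 2 * k) := by
      rcases le_or_gt (2 * k + 1) l with h | h
      · rw [show l - k = l - 1 - k + 1 by omega, pow_succ]
        ring
      · rcases Nat.eq_zero_or_pos l with rfl | hl
        · simp
        · simp [besselNumber_eq_zero_of_lt (show l - 1 < 2 * k by omega)]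
    rw [besselNumber_succ_succ, show l + 1 - (k + 1) = l - k by omega,
      show l + 1 - 2 * (k + 1) = l - 1 - 2 * k by omega, hfirst, hsecond]
    push_cast
    ring
  · simp only [besselNumber_zero_right, Nat.cast_one, one_mul, Nat.sub_zero, mul_zero]
    ring

def PolyGrowth (f : ℝ → ℝ) : Prop := ∃ c k : ℝ, ∀ x, |f x| ≤ c * (1 + |x|) ^ k

theorem PolyGrowth.mul {f g : ℝ → ℝ} (hf : PolyGrowth f) (hg : PolyGrowth g) :
    PolyGrowth (fun x => f x * g x) := by
  obtain ⟨c₁, k₁, h₁⟩ := hf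
  obtain ⟨c₂, k₂, h₂⟩ := hg
  refine ⟨c₁ * c₂, k₁ + k₂, fun x => ?_⟩
  rw [abs_mul, Real.rpow_add (by positivity), mul_mul_mul_comm]
  exact mul_le_mul (h₁ x) (h₂ x) (abs_nonneg _) ((abs_nonneg _).trans (h₁ x))

theorem polyGrowth_sub_pow (μ : ℝ) (j : ℕ) : PolyGrowth (fun x => (x - μ) ^ j) := by
  refine ⟨(1 + |μ|) ^ j, j, fun x => ?_⟩
  rw [Real.rpow_natCast, abs_pow, ← mul_pow]
  gcongr
  calc |x - μ| ≤ |x| + |μ| := abs_sub _ _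
    _ ≤ (1 + |μ|) * (1 + |x|) := by nlinarith [abs_nonneg x, abs_nonneg μ]

namespace ProbabilityTheory

variable {μ : ℝ} {v : ℝ≥0}

theorem integrable_one_add_abs_rpow_gaussianReal (k : ℝ) :
    Integrable (fun x => (1 + |x|) ^ k) (gaussianReal μ v) := by
  have hmem : MemLp (fun x : ℝ => 1 + |x|) k.toNNReal (gaussianReal μ v) :=
    (memLp_const 1).add (f := fun _ => (1 : ℝ)) (memLp_id_gaussianReal k.toNNReal).norm
  refine hmem.integrable_norm_rpow'.mono'
    (by fun_prop : Measurable fun x : ℝ => (1 + |x|) ^ k).aestronglyMeasurable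
    (ae_of_all _ fun x => ?_)
  have hx : 1 ≤ 1 + |x| := le_add_of_nonneg_right (abs_nonneg x)
  simp only [Real.norm_eq_abs, ENNReal.coe_toReal, Real.coe_toNNReal']
  rw [abs_of_nonneg (by positivity : (0 : ℝ) ≤ (1 + |x|) ^ k),
    abs_of_nonneg (by positivity : (0 : ℝ) ≤ 1 + |x|)]
  exact Real.rpow_le_rpow_of_exponent_le hx (le_max_left _ _)

theorem PolyGrowth.integrable_gaussianReal {f : ℝ → ℝ} (hf : PolyGrowth f)
    (hm : AEStronglyMeasurable f (gaussianReal μ v)) : Integrable f (gaussianReal μ v) := by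
  obtain ⟨c, k, h⟩ := hf
  exact ((integrable_one_add_abs_rpow_gaussianReal k).const_mul c).mono' hm
    (ae_of_all _ fun x => (Real.norm_eq_abs _).trans_le (h x))

theorem integrable_mul_sub_pow_gaussianReal {f : ℝ → ℝ} (hc : Continuous f) (hf : PolyGrowth f)
    (j : ℕ) : Integrable (fun x => f x * (x - μ) ^ j) (gaussianReal μ v) :=
  (hf.mul (polyGrowth_sub_pow μ j)).integrable_gaussianReal (by fun_prop)

theorem hasDerivAt_gaussianPDFReal (μ : ℝ) (v : ℝ≥0) (x : ℝ) :
    HasDerivAt (gaussianPDFReal μ v) (-((x - μ) / v) * gaussianPDFReal μ v x) x := by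
  have hexponent : HasDerivAt (fun y => -(y - μ) ^ 2 / (2 * (v : ℝ))) (-((x - μ) / v)) x :=
    ((((hasDerivAt_id x).sub_const μ).pow 2).neg.div_const (2 * (v : ℝ))).congr_deriv
      (by simp only [id]; ring)
  rw [gaussianPDFReal_def]
  exact (hexponent.exp.const_mul (√(2 * π * v))⁻¹).congr_deriv (by ring)

theorem integrable_gaussianReal_iff (hv : v ≠ 0) {f : ℝ → ℝ} :
    Integrable f (gaussianReal μ v) ↔ Integrable (fun x => gaussianPDFReal μ v x * f x) := by
  rw [gaussianReal_of_var_ne_zero μ hv, integrable_withDensity_iff_integrable_smul'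
    (measurable_gaussianPDF μ v) (ae_of_all _ fun _ => gaussianPDF_lt_top)]
  simp_rw [toReal_gaussianPDF, smul_eq_mul]

theorem integral_mul_sub_gaussianReal {f f' : ℝ → ℝ} (hf : ∀ x, HasDerivAt f (f' x) x)
    (hf_int : Integrable f (gaussianReal μ v)) (hf'_int : Integrable f' (gaussianReal μ v))
    (hfx_int : Integrable (fun x => f x * (x - μ)) (gaussianReal μ v)) :
    ∫ x, f x * (x - μ) ∂gaussianReal μ v = v * ∫ x, f' x ∂gaussianReal μ v := by
  rcases eq_or_ne v 0 with rfl | hv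
  · simp
  have hparts : ∫ x, f x * (-((x - μ) / v) * gaussianPDFReal μ v x) =
      -∫ x, f' x * gaussianPDFReal μ v x := by
    refine integral_mul_deriv_eq_deriv_mul_of_integrable (fun x _ => hf x)
      (fun x _ => hasDerivAt_gaussianPDFReal μ v x) ?_ ?_ ?_
    · refine (((integrable_gaussianReal_iff hv).1 hfx_int).const_mul (-(v : ℝ)⁻¹)).congr
        (ae_of_all _ fun x => ?_)
      simp only [Pi.mul_apply]
      ring
    · exact ((integrable_gaussianReal_iff hv).1 hf'_int).congr (ae_of_all _ fun _ => mul_comm _ _)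
    · exact ((integrable_gaussianReal_iff hv).1 hf_int).congr (ae_of_all _ fun _ => mul_comm _ _)
  calc ∫ x, f x * (x - μ) ∂gaussianReal μ v
      = ∫ x, -(v : ℝ) * (f x * (-((x - μ) / v) * gaussianPDFReal μ v x)) := by
        rw [integral_gaussianReal_eq_integral_smul hv]
        congr 1 with x
        field_simp
        ring
    _ = v * ∫ x, f' x ∂gaussianReal μ v := by
        simp only [integral_const_mul, hparts, integral_gaussianReal_eq_integral_smul hv,
          smul_eq_mul, mul_comm (gaussianPDFReal μ v _)]
        ring

theorem integral_mul_sub_pow_succ_gaussianReal {g g' : ℝ → ℝ} (hg : ∀ x, HasDerivAt g (g' x) x)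
    (hg'c : Continuous g') (hgp : PolyGrowth g) (hg'p : PolyGrowth g') (l : ℕ) :
    ∫ x, g x * (x - μ) ^ (l + 1) ∂gaussianReal μ v =
      v * (∫ x, g' x * (x - μ) ^ l ∂gaussianReal μ v +
        l * ∫ x, g x * (x - μ) ^ (l - 1) ∂gaussianReal μ v) := by
  have hgc : Continuous g := continuous_iff_continuousAt.2 fun x => (hg x).continuousAt
  have hderiv : ∀ x, HasDerivAt (fun y => g y * (y - μ) ^ l)
      (g' x * (x - μ) ^ l + l * (g x * (x - μ) ^ (l - 1))) x := fun x =>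
    ((hg x).mul (((hasDerivAt_id x).sub_const μ).pow l)).congr_deriv
      (by simp only [id, Pi.pow_apply]; ring)
  have hint₁ := integrable_mul_sub_pow_gaussianReal (μ := μ) (v := v) hg'c hg'p l
  have hint₂ := integrable_mul_sub_pow_gaussianReal (μ := μ) (v := v) hgc hgp (l - 1)
  simp_rw [pow_succ, ← mul_assoc]
  rw [integral_mul_sub_gaussianReal hderiv (integrable_mul_sub_pow_gaussianReal hgc hgp l)
    (hint₁.add (hint₂.const_mul l)), integral_add hint₁ (hint₂.const_mul l), integral_const_mul]
  simpa only [mul_assoc, ← pow_succ] using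
    integrable_mul_sub_pow_gaussianReal (μ := μ) (v := v) hgc hgp (l + 1)

theorem integral_mul_sub_pow_gaussianReal (l : ℕ) {g : ℝ → ℝ} (hg : ContDiff ℝ l g)
    (hgp : ∀ i ≤ l, PolyGrowth (iteratedDeriv i g)) {K : ℕ} (hK : l / 2 < K) :
    ∫ x, g x * (x - μ) ^ l ∂gaussianReal μ v =
      ∑ k ∈ Finset.range K, (besselNumber l k : ℝ) * v ^ (l - k) *
        ∫ x, iteratedDeriv (l - 2 * k) g x ∂gaussianReal μ v := by
  induction l using Nat.strong_induction_on generalizing g K with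
  | _ l ih =>
  obtain ⟨K, rfl⟩ : ∃ K', K = K' + 1 := Nat.exists_eq_add_one.2 (by omega)
  rcases l with _ | l
  · simp [Finset.sum_range_succ', besselNumber_eq_zero_of_lt]
  have hg' : ContDiff ℝ ((l : WithTop ℕ∞) + 1) g := by exact_mod_cast hg
  obtain ⟨hdiff, -, hderiv⟩ := contDiff_succ_iff_deriv.1 hg'
  have hgp₀ : PolyGrowth g := by simpa using hgp 0 (by omega)
  have hgp₁ : PolyGrowth (deriv g) := by simpa using hgp 1 (by omega)
  have hlower : (l : ℝ) * ∫ x, g x * (x - μ) ^ (l - 1) ∂gaussianReal μ v =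
      l * ∑ k ∈ Finset.range K, (besselNumber (l - 1) k : ℝ) * v ^ (l - 1 - k) *
        ∫ x, iteratedDeriv (l - 1 - 2 * k) g x ∂gaussianReal μ v := by
    rcases Nat.eq_zero_or_pos l with rfl | hl
    · simp
    rw [ih (l - 1) (by omega) (hg.of_le (by exact_mod_cast (by omega : l - 1 ≤ l + 1)))
      (fun i hi => hgp i (by omega)) (K := K) (by omega)]
  rw [integral_mul_sub_pow_succ_gaussianReal (fun x => (hdiff x).hasDerivAt) hderiv.continuous
      hgp₀ hgp₁ l, hlower,
    ih l (by omega) hderiv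
      (fun i hi => by simpa [iteratedDeriv_succ'] using hgp (i + 1) (by omega)) (K := K + 1)
      (by omega)]
  simp_rw [← iteratedDeriv_succ']
  exact (sum_besselNumber_succ l K v fun j => ∫ x, iteratedDeriv j g x ∂gaussianReal μ v).symm

end ProbabilityTheory

/-- Univariate extension of Stein's lemma:
`E[g(X)·X^n] = Σ_{ℓ=0}^n C(n,ℓ) μ^{n-ℓ} Σ_{k=0}^{⌊ℓ/2⌋} H(ℓ,k) σ^{2(ℓ-k)} E[g^{(ℓ-2k)}(X)]`
for `X ~ N(μ, σ²)` (variance `v = σ²`). -/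
theorem univariate_stein_extension (μ : ℝ) (v : NNReal) (n : ℕ) (g : ℝ → ℝ)
    (hg : ContDiff ℝ n g)
    (hgrowth : ∀ i ≤ n, ∃ c k : ℝ, ∀ x, |iteratedDeriv i g x| ≤ c * (1 + |x|) ^ k) :
    ∫ x, g x * x ^ n ∂(gaussianReal μ v) =
      ∑ ℓ ∈ Finset.range (n + 1), (Nat.choose n ℓ : ℝ) * μ ^ (n - ℓ) *
        ∑ k ∈ Finset.range (ℓ / 2 + 1),
          (Nat.factorial ℓ : ℝ) /
              (2 ^ k * Nat.factorial k * Nat.factorial (ℓ - 2 * k)) *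
            (v : ℝ) ^ (ℓ - k) * ∫ x, iteratedDeriv (ℓ - 2 * k) g x ∂(gaussianReal μ v) := by
  have hbinomial : ∀ x, g x * x ^ n =
      ∑ ℓ ∈ Finset.range (n + 1), (n.choose ℓ : ℝ) * μ ^ (n - ℓ) * (g x * (x - μ) ^ ℓ) := by
    intro x
    rw [← sub_add_cancel x μ, add_pow, Finset.mul_sum, sub_add_cancel]
    exact Finset.sum_congr rfl fun ℓ _ => by ring
  have hgp₀ : PolyGrowth (iteratedDeriv 0 g) := hgrowth 0 (Nat.zero_le n)
  rw [iteratedDeriv_zero] at hgp₀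
  simp_rw [hbinomial]
  rw [integral_finsetSum _ fun ℓ _ =>
    (integrable_mul_sub_pow_gaussianReal hg.continuous hgp₀ ℓ).const_mul _]
  refine Finset.sum_congr rfl fun ℓ hℓ => ?_
  have hℓn : ℓ ≤ n := Nat.lt_succ_iff.1 (Finset.mem_range.1 hℓ)
  rw [integral_const_mul, integral_mul_sub_pow_gaussianReal ℓ (hg.of_le (by exact_mod_cast hℓn))
    (fun i hi => hgrowth i (hi.trans hℓn)) (Nat.lt_succ_self _)]
  refine congrArg _ (Finset.sum_congr rfl fun k hk => ?_)
  rw [cast_besselNumber_eq_div (by have := Finset.mem_range.1 hk; omega)]
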